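/- arXiv:1404.2530 — 4 statements merged into one kernel-verified Lean document; each statement's English description precedes it below -/
import Mathlib

section
/- Let (W, n, M) be a transition block for a one-block factor code π from a one-step SFT X to a sofic shift Y, with |W| = t+1, and set A = π_b^{-1}(W)_0, B = π_b^{-1}(W)_n, C = π_b^{-1}(W)_t. If W' is another Y-block of length t'+1 with π_b^{-1}(W')_0 = A, π_b^{-1}(W')_{n'} = B for some 0 ≤ n' < t', and π_b^{-1}(W')_{t'} = C, such that P_{W_0…W_n}(A,B) = P_{W'_0…W'_{n'}}(A,B) and P_{W_n…W_t}(B,C) = P_{W'_{n'}…W'_{t'}}(B,C), then (W', n', M) is also a transition block of π. -/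
open List

/-- `U` is a (nonempty) block of the one-step SFT `X` determined by the
transition relation `TX`. -/
def IsXBlock {AX : Type*} (TX : AX → AX → Prop) (U : List AX) : Prop :=
  U ≠ [] ∧ U.Chain' TX

/-- The set of `X`-blocks mapping (symbol-wise, via `πb`) to the word `W`. -/
def preim {AX AY : Type*} (TX : AX → AX → Prop) (πb : AX → AY) (W : List AY) :
    Set (List AX) :=
  {U | IsXBlock TX U ∧ U.map πb = W}

/-- `W` is a block of the sofic shift `Y = π(X)`. -/
def IsYBlock {AX AY : Type*} (TX : AX → AX → Prop) (πb : AX → AY) (W : List AY) : Prop :=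
  (preim TX πb W).Nonempty

/-- `π_b^{-1}(W)_i`: the symbols occurring at position `i` in some preimage block of `W`. -/
def preimAt {AX AY : Type*} (TX : AX → AX → Prop) (πb : AX → AY) (W : List AY) (i : ℕ) :
    Set AX :=
  {a | ∃ U ∈ preim TX πb W, U[i]? = some a}

/-- The `W`-pairing: the set of (first symbol, last symbol) pairs realized by
preimage blocks of `W`. -/
def pairing {AX AY : Type*} (TX : AX → AX → Prop) (πb : AX → AY) (W : List AY) :
    Set (AX × AX) :=
  {p | ∃ U ∈ preim TX πb W, U.head? = some p.1 ∧ U.getLast? = some p.2}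

/-- `U ∈ π_b^{-1}(W)` is routable through `a` at time `n`. -/
def Routable {AX AY : Type*} (TX : AX → AX → Prop) (πb : AX → AY) (W : List AY) (n : ℕ)
    (a : AX) (U : List AX) : Prop :=
  ∃ U' ∈ preim TX πb W, U'.head? = U.head? ∧ U'[n]? = some a ∧ U'.getLast? = U.getLast?

/-- `(W, n, M)` is a transition block. -/
def IsTransBlock {AX AY : Type*} (TX : AX → AX → Prop) (πb : AX → AY) (W : List AY)
    (n : ℕ) (M : Finset AX) : Prop :=
  IsYBlock TX πb W ∧ 0 < n ∧ n < W.length - 1 ∧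
    (∀ a ∈ M, a ∈ preimAt TX πb W n) ∧
    ∀ U ∈ preim TX πb W, ∃ a ∈ M, Routable TX πb W n a U

/-!
Whether a preimage block of `W` can be rerouted through `a` at time `n` depends only on its
first and last symbols `x`, `z`, and a preimage block of `W` running `x → a → z` exists exactly
when `(x, a)` and `(a, z)` lie in the pairings of the two halves `W₀…Wₙ` and `Wₙ…Wₜ`: since `X`
is a one-step SFT, preimage blocks of the halves agreeing at the common symbol glue together.
Equal half pairings therefore make `(W, n)` and `(W', n')` realize the same triples `x → a → z`.
-/

section Preimage

variable {AX AY : Type*} {TX : AX → AX → Prop} {πb : AX → AY} {W W' : List AY} {U : List AX}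
  {n n' : ℕ} {x a z : AX}

lemma length_eq_of_mem_preim (h : U ∈ preim TX πb W) : U.length = W.length := by
  rw [← h.2, List.length_map]

lemma take_mem_preim (h : U ∈ preim TX πb W) {k : ℕ} (hk : 0 < k) :
    U.take k ∈ preim TX πb (W.take k) := by
  obtain ⟨⟨hne, hchain⟩, hmap⟩ := h
  refine ⟨⟨?_, hchain.take k⟩, by rw [List.map_take, hmap]⟩
  simp only [ne_eq, List.take_eq_nil_iff, not_or]
  exact ⟨by omega, hne⟩

lemma drop_mem_preim (h : U ∈ preim TX πb W) {k : ℕ} (hk : k < W.length) :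
    U.drop k ∈ preim TX πb (W.drop k) := by
  have hlen := length_eq_of_mem_preim h
  obtain ⟨⟨-, hchain⟩, hmap⟩ := h
  refine ⟨⟨?_, hchain.drop k⟩, by rw [List.map_drop, hmap]⟩
  simp only [ne_eq, List.drop_eq_nil_iff, not_le]
  omega

lemma append_mem_preim_of_overlap {V : List AX} {b : AX} {S : List AX}
    (hV : V ∈ preim TX πb (W.take (n + 1))) (hbS : b :: S ∈ preim TX πb (W.drop n))
    (hb : V.getLast? = some b) : V ++ S ∈ preim TX πb W := by
  obtain ⟨⟨hne, hchainV⟩, hmapV⟩ := hV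
  obtain ⟨⟨-, hchainbS⟩, hmapbS⟩ := hbS
  have hmapS : S.map πb = W.drop (n + 1) := by
    rw [← List.tail_drop, ← hmapbS, List.map_cons, List.tail_cons]
  refine ⟨⟨by simp [hne], ?_⟩, by rw [List.map_append, hmapV, hmapS, List.take_append_drop]⟩
  refine hchainV.append hchainbS.tail fun b' hb' y hy => ?_
  rw [hb, Option.mem_some_iff] at hb'
  exact hb' ▸ (List.isChain_cons.1 hchainbS).1 y hy

variable (TX πb) in
def PassesThrough (W : List AY) (n : ℕ) (x a z : AX) : Prop :=
  ∃ V ∈ preim TX πb W, V.head? = some x ∧ V[n]? = some a ∧ V.getLast? = some z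

lemma passesThrough_iff (hn : n < W.length) :
    PassesThrough TX πb W n x a z ↔
      (x, a) ∈ pairing TX πb (W.take (n + 1)) ∧ (a, z) ∈ pairing TX πb (W.drop n) := by
  constructor
  · rintro ⟨V, hV, hx, ha, hz⟩
    have hlen := length_eq_of_mem_preim hV
    refine ⟨⟨V.take (n + 1), take_mem_preim hV n.succ_pos, ?_, ?_⟩,
      ⟨V.drop n, drop_mem_preim hV hn, ?_, ?_⟩⟩
    · simpa [List.head?_take] using hx
    · simp [List.getLast?_take, ha]
    · simpa [List.head?_drop] using ha
    · simpa [List.getLast?_drop, hlen, hn] using hz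
  · rintro ⟨⟨V, hV, hx : V.head? = some x, ha : V.getLast? = some a⟩,
      ⟨V', hV', ha' : V'.head? = some a, hz : V'.getLast? = some z⟩⟩
    obtain ⟨S, rfl⟩ := List.head?_eq_some_iff.1 ha'
    have hlen : V.length = n + 1 := by
      rw [length_eq_of_mem_preim hV, List.length_take]
      omega
    refine ⟨V ++ S, append_mem_preim_of_overlap hV hV' ha, ?_, ?_, ?_⟩
    · rwa [List.head?_append_of_ne_nil _ hV.1.1]
    · rw [List.getElem?_append_left (by omega), ← ha, List.getLast?_eq_getElem?, hlen]
      rfl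
    · rw [List.getLast?_cons, Option.some_inj] at hz
      rw [List.getLast?_append, ha, ← hz]
      cases S.getLast? <;> rfl

lemma passesThrough_congr (hn : n < W.length) (hn' : n' < W'.length)
    (hP₁ : pairing TX πb (W.take (n + 1)) = pairing TX πb (W'.take (n' + 1)))
    (hP₂ : pairing TX πb (W.drop n) = pairing TX πb (W'.drop n')) :
    PassesThrough TX πb W n x a z ↔ PassesThrough TX πb W' n' x a z := by
  rw [passesThrough_iff hn, passesThrough_iff hn', hP₁, hP₂]

lemma routable_iff_passesThrough (hx : U.head? = some x) (hz : U.getLast? = some z) :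
    Routable TX πb W n a U ↔ PassesThrough TX πb W n x a z := by
  simp only [Routable, PassesThrough, hx, hz]

lemma exists_passesThrough_of_mem_preim (hU : U ∈ preim TX πb W) (hn : n < W.length) :
    ∃ x b z, U.head? = some x ∧ U.getLast? = some z ∧ PassesThrough TX πb W n x b z := by
  obtain ⟨x, hx⟩ := Option.ne_none_iff_exists'.1 (mt List.head?_eq_none_iff.1 hU.1.1)
  obtain ⟨z, hz⟩ := Option.ne_none_iff_exists'.1 (mt List.getLast?_eq_none_iff.1 hU.1.1)
  have hnU : n < U.length := length_eq_of_mem_preim hU ▸ hn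
  exact ⟨x, U[n], z, hx, hz, U, hU, hx, List.getElem?_eq_getElem hnU, hz⟩

end Preimage

theorem transBlock_transfer_general {AX AY : Type*} (TX : AX → AX → Prop) (πb : AX → AY)
    (W W' : List AY) (n n' : ℕ) (M : Finset AX)
    (hT : IsTransBlock TX πb W n M)
    (hW' : IsYBlock TX πb W')
    (hn'0 : 0 < n') (hn't : n' < W'.length - 1)
    (hmid : preimAt TX πb W' n' = preimAt TX πb W n)
    (hP1 : pairing TX πb (W.take (n + 1)) = pairing TX πb (W'.take (n' + 1)))
    (hP2 : pairing TX πb (W.drop n) = pairing TX πb (W'.drop n')) :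
    IsTransBlock TX πb W' n' M := by
  obtain ⟨-, -, hnt, hM, hroute⟩ := hT
  have hn : n < W.length := by omega
  have hn' : n' < W'.length := by omega
  refine ⟨hW', hn'0, hn't, fun a ha => hmid ▸ hM a ha, fun U hU => ?_⟩
  obtain ⟨x, b, z, hx, hz, hUxbz⟩ := exists_passesThrough_of_mem_preim hU hn'
  obtain ⟨V, hV, hVx, -, hVz⟩ := (passesThrough_congr hn hn' hP1 hP2).2 hUxbz
  obtain ⟨a, haM, hVa⟩ := hroute V hV
  rw [routable_iff_passesThrough hVx hVz, passesThrough_congr hn hn' hP1 hP2,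
    ← routable_iff_passesThrough hx hz] at hVa
  exact ⟨a, haM, hVa⟩

/-- If `(W, n, M)` is a transition block and `W'` has the same endpoint/midpoint
preimage sets and the same pairings on the two halves, then `(W', n', M)` is
also a transition block. -/
theorem transBlock_transfer {AX AY : Type*} (TX : AX → AX → Prop) (πb : AX → AY)
    (W W' : List AY) (n n' : ℕ) (M : Finset AX)
    (hT : IsTransBlock TX πb W n M)
    (hW' : IsYBlock TX πb W')
    (hn'0 : 0 < n') (hn't : n' < W'.length - 1)
    (h0 : preimAt TX πb W' 0 = preimAt TX πb W 0)
    (hmid : preimAt TX πb W' n' = preimAt TX πb W n)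
    (hend : preimAt TX πb W' (W'.length - 1) = preimAt TX πb W (W.length - 1))
    (hP1 : pairing TX πb (W.take (n + 1)) = pairing TX πb (W'.take (n' + 1)))
    (hP2 : pairing TX πb (W.drop n) = pairing TX πb (W'.drop n')) :
    IsTransBlock TX πb W' n' M :=
  transBlock_transfer_general TX πb W W' n n' M hT hW' hn'0 hn't hmid hP1 hP2
end

section
/- Let π be a one-block factor code from a one-step SFT X to a sofic shift Y, and let f = max over symbols w of Y of |π_b^{-1}(w)|. Then there exists a minimal transition block (W, n, M) of π (i.e., a transition block whose depth |M| equals the minimum depth over all transition blocks) with |W| ≤ |𝒜(Y)| · 2^{f² + f + 1}. -/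
/-!
A transition block `(W, n, M)` stays one when the segment of `W` from the marked position `n` to
a later position is replaced by a word with the same lift relation (the pairs `(a, b)` joined by
an `X`-path over it): preimage blocks can be re-spliced along such a segment in both directions,
keeping their endpoints and their symbol at `n`. The lift relation of `W[n, k]` lies in
`π_b^{-1}(W_n) × π_b^{-1}(W_k)`, so it takes at most `|𝒜(Y)| · 2^{f²}` values; if more positions
follow `n`, two of them carry the same relation and the word between them can be cut out.
Positions before `n` are handled by reversing the word and the SFT. So a transition block of
minimal depth can be shortened, keeping `M`, until both sides of `n` are short.
-/

open List

/-- The fiber `π_b^{-1}(b)` of a `Y`-symbol. -/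
def fiber {AX AY : Type*} [Fintype AX] [DecidableEq AY] (πb : AX → AY) (b : AY) :
    Finset AX :=
  Finset.univ.filter (fun a => πb a = b)

/-- `f = max_{w ∈ 𝒜(Y)} |π_b^{-1}(w)|`. -/
def fMax {AX AY : Type*} [Fintype AX] [Fintype AY] [DecidableEq AY] (πb : AX → AY) : ℕ :=
  Finset.univ.sup (fun b : AY => (fiber πb b).card)

namespace List

variable {α : Type*} {R : α → α → Prop}

theorem IsChain.replace_middle {l₁ l₂ l₂' l₃ : List α} (h : IsChain R (l₁ ++ l₂ ++ l₃))
    (h₂' : IsChain R l₂') (hhead : l₂'.head? = l₂.head?) (hlast : l₂'.getLast? = l₂.getLast?) :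
    IsChain R (l₁ ++ l₂' ++ l₃) := by
  obtain ⟨h₁₂, h₃, hj₂₃⟩ := isChain_append.mp h
  obtain ⟨h₁, -, hj₁₂⟩ := isChain_append.mp h₁₂
  refine (h₁.append h₂' ?_).append h₃ ?_
  · rwa [hhead]
  · rwa [getLast?_append, hlast, ← getLast?_append]

end List

section TransitionBlocks

variable {AX AY : Type*} {TX : AX → AX → Prop} {πb : AX → AY}

def LiftRel (TX : AX → AX → Prop) (πb : AX → AY) (V : List AY) (a b : AX) : Prop :=
  ∃ U ∈ preim TX πb V, U.head? = some a ∧ U.getLast? = some b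

theorem LiftRel.head?_getLast? {V : List AY} {a b : AX} (h : LiftRel TX πb V a b) :
    V.head? = some (πb a) ∧ V.getLast? = some (πb b) := by
  obtain ⟨U, ⟨-, rfl⟩, ha, hb⟩ := h
  simp [ha, hb]

theorem exists_preim_replace_middle {A B B' C : List AY} (hB : B ≠ [])
    (hrel : ∀ a b, LiftRel TX πb B a b → LiftRel TX πb B' a b) {U : List AX}
    (hU : U ∈ preim TX πb (A ++ B ++ C)) :
    ∃ U' ∈ preim TX πb (A ++ B' ++ C),
      U'.head? = U.head? ∧ U'[A.length]? = U[A.length]? ∧ U'.getLast? = U.getLast? := by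
  obtain ⟨⟨-, hchain⟩, hmap⟩ := hU
  obtain ⟨UAB, UC, rfl, hAB, rfl⟩ := map_eq_append_iff.mp hmap
  obtain ⟨UA, UB, rfl, rfl, rfl⟩ := map_eq_append_iff.mp hAB
  have hUB : UB ≠ [] := by simpa using hB
  obtain ⟨UB', ⟨⟨-, hchain'⟩, hmap'⟩, hhead, hlast⟩ :=
    hrel _ _ ⟨UB, ⟨⟨hUB, hchain.infix ⟨UA, UC, rfl⟩⟩, rfl⟩, head?_eq_some_head hUB,
      getLast?_eq_some_getLast hUB⟩
  rw [← head?_eq_some_head hUB] at hhead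
  rw [← getLast?_eq_some_getLast hUB] at hlast
  have hUB' : UB' ≠ [] := by rintro rfl; exact hUB (head?_eq_none_iff.mp hhead.symm)
  refine ⟨UA ++ UB' ++ UC, ⟨⟨by simp [hUB'], hchain.replace_middle hchain' hhead hlast⟩,
    by simp [hmap']⟩, ?_, ?_, ?_⟩
  · simp [hhead]
  · simp [getElem?_append_right, ← head?_eq_getElem?, hhead]
  · simp [hlast]

theorem preim_length {W : List AY} {U : List AX} (hU : U ∈ preim TX πb W) :
    U.length = W.length := by
  rw [← hU.2, length_map]

theorem IsTransBlock.replace_middle {A B B' C : List AY} {M : Finset AX}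
    (h : IsTransBlock TX πb (A ++ B ++ C) A.length M) (hB : B ≠ []) (hB' : B' ≠ [])
    (hC : C ≠ []) (hrel : LiftRel TX πb B = LiftRel TX πb B') :
    IsTransBlock TX πb (A ++ B' ++ C) A.length M := by
  obtain ⟨⟨U₀, hU₀⟩, hpos, -, hM, hroute⟩ := h
  have shrink {U : List AX} (hU : U ∈ preim TX πb (A ++ B ++ C)) :=
    exists_preim_replace_middle hB (fun a b => (hrel ▸ ·)) hU
  have grow {U : List AX} (hU : U ∈ preim TX πb (A ++ B' ++ C)) :=
    exists_preim_replace_middle hB' (fun a b => (hrel ▸ ·)) hU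
  refine ⟨⟨_, (shrink hU₀).choose_spec.1⟩, hpos, ?_, fun a ha => ?_, fun U hU => ?_⟩
  · simp only [length_append]
    have := length_pos_iff.mpr hB'
    have := length_pos_iff.mpr hC
    omega
  · obtain ⟨U, hU, hUa⟩ := hM a ha
    obtain ⟨U', hU', -, hidx, -⟩ := shrink hU
    exact ⟨U', hU', hidx.trans hUa⟩
  · obtain ⟨V, hV, hVhead, -, hVlast⟩ := grow hU
    obtain ⟨a, haM, V', hV', hhead, hidx, hlast⟩ := hroute V hV
    obtain ⟨U', hU', hhead', hidx', hlast'⟩ := shrink hV'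
    exact ⟨a, haM, U', hU', by rw [hhead', hhead, hVhead], hidx'.trans hidx,
      by rw [hlast', hlast, hVlast]⟩

theorem reverse_mem_preim {W : List AY} {U : List AX} (hU : U ∈ preim TX πb W) :
    U.reverse ∈ preim (flip TX) πb W.reverse :=
  ⟨⟨by simpa using hU.1.1, isChain_reverse.mpr hU.1.2⟩, by rw [map_reverse, hU.2]⟩

theorem IsTransBlock.reverse {W : List AY} {n : ℕ} {M : Finset AX}
    (h : IsTransBlock TX πb W n M) :
    IsTransBlock (flip TX) πb W.reverse (W.length - 1 - n) M := by
  obtain ⟨⟨U₀, hU₀⟩, hpos, hlt, hM, hroute⟩ := h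
  have hidx {U : List AX} (hU : U ∈ preim TX πb W) :
      U.reverse[W.length - 1 - n]? = U[n]? := by
    rw [getElem?_reverse (by rw [preim_length hU]; omega), preim_length hU]
    congr 1
    omega
  refine ⟨⟨_, reverse_mem_preim hU₀⟩, by omega, by rw [length_reverse]; omega,
    fun a ha => ?_, fun U hU => ?_⟩
  · obtain ⟨U, hU, hUa⟩ := hM a ha
    exact ⟨U.reverse, reverse_mem_preim hU, (hidx hU).trans hUa⟩
  · have hU' : U.reverse ∈ preim TX πb W := by
      simpa using reverse_mem_preim (TX := flip TX) hU
    obtain ⟨a, haM, V, hV, hhead, hV_a, hlast⟩ := hroute _ hU'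
    exact ⟨a, haM, V.reverse, reverse_mem_preim hV, by simp [hlast], (hidx hV).trans hV_a,
      by simp [hhead]⟩

theorem exists_transBlock [Fintype AX] [Nonempty AX] (hright : ∀ a, ∃ b, TX a b) :
    ∃ (W : List AY) (n : ℕ) (M : Finset AX), IsTransBlock TX πb W n M := by
  classical
  obtain ⟨a⟩ := ‹Nonempty AX›
  obtain ⟨b, hab⟩ := hright a
  obtain ⟨c, hbc⟩ := hright b
  set W := [πb a, πb b, πb c]
  refine ⟨W, 1, Finset.univ.filter (· ∈ preimAt TX πb W 1),
    ⟨[a, b, c], ⟨by simp, show IsChain TX [a, b, c] by simp [hab, hbc]⟩, rfl⟩, one_pos,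
    by simp [W], fun x hx => (Finset.mem_filter.mp hx).2, fun U hU => ?_⟩
  have h1 : 1 < U.length := by simp [preim_length hU, W]
  exact ⟨U[1], Finset.mem_filter.mpr ⟨Finset.mem_univ _, U, hU, getElem?_eq_getElem h1⟩,
    U, hU, rfl, getElem?_eq_getElem h1, rfl⟩

end TransitionBlocks

section Shortening

variable {AX AY : Type*} [Fintype AX] [Fintype AY] [DecidableEq AY]
  {TX : AX → AX → Prop} {πb : AX → AY}

theorem card_fiber_le_fMax (b : AY) : (fiber πb b).card ≤ fMax πb :=
  Finset.le_sup (f := fun b => (fiber πb b).card) (Finset.mem_univ b)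

theorem one_le_fMax [Nonempty AX] : 1 ≤ fMax πb := by
  obtain ⟨x⟩ := ‹Nonempty AX›
  have hx : x ∈ fiber πb (πb x) := by simp [fiber]
  exact (Finset.card_pos.mpr ⟨x, hx⟩).trans_le (card_fiber_le_fMax (πb x))

theorem card_biUnion_powerset_fiber_le [DecidableEq AX] (c : AY) :
    (Finset.univ.biUnion fun w => (fiber πb c ×ˢ fiber πb w).powerset).card ≤
      Fintype.card AY * 2 ^ (fMax πb ^ 2) := by
  calc _ ≤ ∑ w : AY, (fiber πb c ×ˢ fiber πb w).powerset.card := Finset.card_biUnion_le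
    _ ≤ ∑ _w : AY, 2 ^ (fMax πb ^ 2) := by
      gcongr with w
      rw [Finset.card_powerset, Finset.card_product, sq]
      gcongr
      · norm_num
      all_goals exact card_fiber_le_fMax _
    _ = _ := by simp

theorem exists_lt_liftRel_take_eq {D : List AY} {c : AY} (hc : D.head? = some c)
    (hlong : Fintype.card AY * 2 ^ (fMax πb ^ 2) < D.length - 1) :
    ∃ i j, i < j ∧ j < D.length - 1 ∧
      LiftRel TX πb (D.take (i + 1)) = LiftRel TX πb (D.take (j + 1)) := by
  classical
  let rel (k : ℕ) : Finset (AX × AX) :=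
    Finset.univ.filter fun p => LiftRel TX πb (D.take (k + 1)) p.1 p.2
  have hmaps : Set.MapsTo rel (Finset.range (D.length - 1))
      (Finset.univ.biUnion fun w => (fiber πb c ×ˢ fiber πb w).powerset) := by
    intro k hk
    have hne : D.take (k + 1) ≠ [] := by
      rw [← length_pos_iff, length_take]
      simp only [Finset.coe_range, Set.mem_Iio] at hk
      omega
    refine Finset.mem_biUnion.mpr ⟨(D.take (k + 1)).getLast hne, Finset.mem_univ _,
      Finset.mem_powerset.mpr fun p hp => ?_⟩
    obtain ⟨hhead, hlast⟩ := (Finset.mem_filter.mp hp).2.head?_getLast?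
    rw [head?_take, if_neg (by omega), hc] at hhead
    rw [getLast?_eq_some_getLast hne] at hlast
    simp [fiber, Option.some.inj hhead, Option.some.inj hlast]
  obtain ⟨i, hi, j, hj, hne, hij⟩ := Finset.exists_ne_map_eq_of_card_lt_of_maps_to
    (by simpa using (card_biUnion_powerset_fiber_le c).trans_lt hlong) hmaps
  have key : LiftRel TX πb (D.take (i + 1)) = LiftRel TX πb (D.take (j + 1)) := by
    ext a b
    simpa [rel] using Finset.ext_iff.mp hij (a, b)
  rcases hne.lt_or_gt with h | h
  · exact ⟨i, j, h, by simpa using hj, key⟩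
  · exact ⟨j, i, h, by simpa using hi, key.symm⟩

theorem IsTransBlock.exists_shorter_of_right {W : List AY} {n : ℕ} {M : Finset AX}
    (h : IsTransBlock TX πb W n M)
    (hlong : Fintype.card AY * 2 ^ (fMax πb ^ 2) < W.length - 1 - n) :
    ∃ W', IsTransBlock TX πb W' n M ∧ W'.length < W.length := by
  set D := W.drop n with hD
  have hDlen : D.length = W.length - n := length_drop
  obtain ⟨c, hc⟩ : ∃ c, D.head? = some c :=
    ⟨_, head?_eq_some_head (ne_nil_of_length_pos (by omega))⟩
  obtain ⟨i, j, hij, hj, hrel⟩ := exists_lt_liftRel_take_eq (TX := TX) (πb := πb) hc (by omega)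
  have hA : (W.take n).length = n := by simp; omega
  have hW : W.take n ++ D.take (j + 1) ++ D.drop (j + 1) = W := by
    rw [append_assoc, take_append_drop, hD, take_append_drop]
  have hne {k : ℕ} (hk : k < D.length) : D.take (k + 1) ≠ [] := by
    rw [← length_pos_iff, length_take]
    omega
  have h' : IsTransBlock TX πb (W.take n ++ D.take (j + 1) ++ D.drop (j + 1))
      (W.take n).length M := by rwa [hW, hA]
  refine ⟨W.take n ++ D.take (i + 1) ++ D.drop (j + 1), ?_, ?_⟩
  · simpa only [hA] using h'.replace_middle (hne (by omega)) (hne (by omega))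
      (by simp; omega) hrel.symm
  · simp only [length_append, length_take, length_drop, hDlen]
    omega

theorem IsTransBlock.exists_shorter_of_left {W : List AY} {n : ℕ} {M : Finset AX}
    (h : IsTransBlock TX πb W n M) (hlong : Fintype.card AY * 2 ^ (fMax πb ^ 2) < n) :
    ∃ W' n', IsTransBlock TX πb W' n' M ∧ W'.length < W.length := by
  have hlt : n < W.length - 1 := h.2.2.1
  obtain ⟨V, hV, hVlen⟩ := h.reverse.exists_shorter_of_right (by rw [length_reverse]; omega)
  exact ⟨V.reverse, _, hV.reverse, by simpa using hVlen⟩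

theorem IsTransBlock.exists_shorter [Nonempty AX] {W : List AY} {n : ℕ} {M : Finset AX}
    (h : IsTransBlock TX πb W n M)
    (hlong : Fintype.card AY * 2 ^ (fMax πb ^ 2 + fMax πb + 1) < W.length) :
    ∃ W' n', IsTransBlock TX πb W' n' M ∧ W'.length < W.length := by
  set N := Fintype.card AY * 2 ^ (fMax πb ^ 2)
  have : Nonempty AY := .map πb ‹_›
  have hN : 1 ≤ N := Nat.one_le_iff_ne_zero.mpr (by positivity)
  have h4 : N * 4 ≤ Fintype.card AY * 2 ^ (fMax πb ^ 2 + fMax πb + 1) := by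
    rw [add_assoc, pow_add, ← mul_assoc]
    gcongr
    calc 4 = 2 ^ 2 := rfl
      _ ≤ 2 ^ (fMax πb + 1) :=
        Nat.pow_le_pow_right two_pos (by linarith [one_le_fMax (πb := πb)])
  rcases le_or_gt (W.length - 1 - n) N with hfar | hfar
  · exact h.exists_shorter_of_left (by omega)
  · obtain ⟨W', hW', hlen⟩ := h.exists_shorter_of_right hfar
    exact ⟨W', n, hW', hlen⟩

theorem IsTransBlock.exists_short [Nonempty AX] {W : List AY} {n : ℕ} {M : Finset AX}
    (h : IsTransBlock TX πb W n M) :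
    ∃ W' n', IsTransBlock TX πb W' n' M ∧
      W'.length ≤ Fintype.card AY * 2 ^ (fMax πb ^ 2 + fMax πb + 1) := by
  induction hL : W.length using Nat.strong_induction_on generalizing W n with
  | _ L ih =>
    by_cases hshort : W.length ≤ Fintype.card AY * 2 ^ (fMax πb ^ 2 + fMax πb + 1)
    · exact ⟨W, n, h, hshort⟩
    · obtain ⟨W', n', h', hlt⟩ := h.exists_shorter (not_le.mp hshort)
      exact ih _ (hL ▸ hlt) h' rfl

end Shortening

theorem minimal_transBlock_length_bound_general {AX AY : Type*}
    [Fintype AX] [Fintype AY] [DecidableEq AY] [Nonempty AX]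
    (TX : AX → AX → Prop) (πb : AX → AY)
    (hright : ∀ a : AX, ∃ b : AX, TX a b) :
    ∃ (W : List AY) (n : ℕ) (M : Finset AX),
      IsTransBlock TX πb W n M ∧
      W.length ≤ Fintype.card AY * 2 ^ ((fMax πb) ^ 2 + fMax πb + 1) ∧
      ∀ (W' : List AY) (n' : ℕ) (M' : Finset AX),
        IsTransBlock TX πb W' n' M' → M.card ≤ M'.card := by
  classical
  have hdepth : ∃ d, ∃ (W : List AY) (n : ℕ) (M : Finset AX),
      IsTransBlock TX πb W n M ∧ M.card = d := by
    obtain ⟨W, n, M, h⟩ := exists_transBlock (πb := πb) hright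
    exact ⟨_, W, n, M, h, rfl⟩
  obtain ⟨W, n, M, hmin, hcard⟩ := Nat.find_spec hdepth
  obtain ⟨W', n', hshort, hlen⟩ := hmin.exists_short
  exact ⟨W', n', M, hshort, hlen, fun W'' n'' M'' h'' =>
    hcard ▸ Nat.find_min' hdepth ⟨W'', n'', M'', h'', rfl⟩⟩

/-- There is a minimal transition block `(W, n, M)` with
`|W| ≤ |𝒜(Y)| · 2 ^ (f² + f + 1)`. -/
theorem minimal_transBlock_length_bound {AX AY : Type*}
    [Fintype AX] [Fintype AY] [DecidableEq AX] [DecidableEq AY] [Nonempty AX]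
    (TX : AX → AX → Prop) (πb : AX → AY)
    (hright : ∀ a : AX, ∃ b : AX, TX a b) (hleft : ∀ a : AX, ∃ b : AX, TX b a) :
    ∃ (W : List AY) (n : ℕ) (M : Finset AX),
      IsTransBlock TX πb W n M ∧
      W.length ≤ Fintype.card AY * 2 ^ ((fMax πb) ^ 2 + fMax πb + 1) ∧
      ∀ (W' : List AY) (n' : ℕ) (M' : Finset AX),
        IsTransBlock TX πb W' n' M' → M.card ≤ M'.card :=
  minimal_transBlock_length_bound_general TX πb hright
end

section
/- With the graphs G and G' as above (subset-construction graphs tracking preimage symbol sets of Y-blocks forward and backward respectively), if A ∈ S (reachable in G from some full-preimage vertex π_b^{-1}(b)) and A' ∈ S' (reaching some full-preimage vertex in G') with A ∩ A' ≠ ∅, then A ∩ A' = {a ∈ 𝒜(X) : ∃ W' ∈ π_b^{-1}(W) with W'_c = a}, where W is the Y-block obtained by concatenating a Y-block witnessing A ∈ S (of length c+1, ending at A) with a Y-block witnessing A' ∈ S' (starting at A'), overlapping at position c. In particular d*_π ≤ |A ∩ A'|. -/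
open List

/-- Edge of the forward subset-construction graph `G`. -/
def edgeG {AX AY : Type*} [Fintype AX] [DecidableEq AX] [DecidableEq AY]
    (TX : AX → AX → Prop) [DecidableRel TX] (πb : AX → AY) :
    AY × Finset AX → AY × Finset AX → Prop := fun p q =>
  p.2 ⊆ fiber πb p.1 ∧ q.2 ⊆ fiber πb q.1 ∧ IsYBlock TX πb [p.1, q.1] ∧
    q.2 = (fiber πb q.1).filter (fun a' => ∃ a ∈ p.2, TX a a')

/-- Edge of the backward subset-construction graph `G'`. -/
def edgeG' {AX AY : Type*} [Fintype AX] [DecidableEq AX] [DecidableEq AY]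
    (TX : AX → AX → Prop) [DecidableRel TX] (πb : AX → AY) :
    AY × Finset AX → AY × Finset AX → Prop := fun p q =>
  p.2 ⊆ fiber πb p.1 ∧ q.2 ⊆ fiber πb q.1 ∧ IsYBlock TX πb [p.1, q.1] ∧
    p.2 = (fiber πb p.1).filter (fun a => ∃ a' ∈ q.2, TX a a')

/-- `p ∈ S`: reachable in `G` from a full-fiber vertex of `𝒰`. -/
def reachG {AX AY : Type*} [Fintype AX] [DecidableEq AX] [DecidableEq AY]
    (TX : AX → AX → Prop) [DecidableRel TX] (πb : AX → AY) (p : AY × Finset AX) : Prop :=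
  ∃ b0 : AY, Relation.ReflTransGen (edgeG TX πb) (b0, fiber πb b0) p

/-- `p ∈ S'`: some full-fiber vertex of `𝒰` is reachable from `p` in `G'`. -/
def reachG' {AX AY : Type*} [Fintype AX] [DecidableEq AX] [DecidableEq AY]
    (TX : AX → AX → Prop) [DecidableRel TX] (πb : AX → AY) (p : AY × Finset AX) : Prop :=
  ∃ b0 : AY, Relation.ReflTransGen (edgeG' TX πb) p (b0, fiber πb b0)

/-- `d*_π`: the minimum over `Y`-blocks `W` and positions `i` of `|π_b^{-1}(W)_i|`. -/
noncomputable def dstar {AX AY : Type*} (TX : AX → AX → Prop) (πb : AX → AY) : ℕ :=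
  sInf {k | ∃ (W : List AY) (i : ℕ), IsYBlock TX πb W ∧ i < W.length ∧
    (preimAt TX πb W i).ncard = k}

/-- `U` is a walk in `G` over the label word `W`. -/
def IsGWalk {AX AY : Type*} [Fintype AX] [DecidableEq AX] [DecidableEq AY]
    (TX : AX → AX → Prop) [DecidableRel TX] (πb : AX → AY)
    (W : List AY) (U : List (Finset AX)) : Prop :=
  U.length = W.length ∧
    (∀ (i : ℕ) (b : AY) (A : Finset AX), W[i]? = some b → U[i]? = some A → A ⊆ fiber πb b) ∧
    (∀ (i : ℕ) (b b' : AY) (A A' : Finset AX), W[i]? = some b → W[i + 1]? = some b' →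
      U[i]? = some A → U[i + 1]? = some A' → edgeG TX πb (b, A) (b', A'))

/-- `U` is a walk in `G'` over the label word `W`. -/
def IsG'Walk {AX AY : Type*} [Fintype AX] [DecidableEq AX] [DecidableEq AY]
    (TX : AX → AX → Prop) [DecidableRel TX] (πb : AX → AY)
    (W : List AY) (U : List (Finset AX)) : Prop :=
  U.length = W.length ∧
    (∀ (i : ℕ) (b : AY) (A : Finset AX), W[i]? = some b → U[i]? = some A → A ⊆ fiber πb b) ∧
    (∀ (i : ℕ) (b b' : AY) (A A' : Finset AX), W[i]? = some b → W[i + 1]? = some b' →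
      U[i]? = some A → U[i + 1]? = some A' → edgeG' TX πb (b, A) (b', A'))

/-! The last vertex of a `G`-walk over `P` started at the full fibre of its first symbol is, by
induction along the walk, the set of last symbols of preimages of `P`; dually, the first vertex
of a `G'`-walk over `Q` ending at a full fibre is the set of first symbols of preimages of `Q`.
A common symbol `a` of the two sets forces the last symbol of `P` to be the first of `Q`, and
since `X` is a one-step SFT, a preimage of `P` ending in `a` and a preimage of `Q` starting in
`a` glue along `a` to a preimage of the overlapped word; conversely every preimage of that word
splits at position `|P| - 1` into two such pieces. -/

section Blocks

variable {AX AY : Type*} {TX : AX → AX → Prop} {πb : AX → AY}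

theorem mem_preim_iff {U : List AX} {W : List AY} :
    U ∈ preim TX πb W ↔ U ≠ [] ∧ U.IsChain TX ∧ U.map πb = W :=
  and_assoc

theorem head?_eq_of_mem_pairing {W : List AY} {h a : AX} (hp : (h, a) ∈ pairing TX πb W) :
    W.head? = some (πb h) := by
  obtain ⟨U, ⟨-, rfl⟩, hhead, -⟩ := hp
  simp [List.head?_map, hhead]

theorem getLast?_eq_of_mem_pairing {W : List AY} {h a : AX} (hp : (h, a) ∈ pairing TX πb W) :
    W.getLast? = some (πb a) := by
  obtain ⟨U, ⟨-, rfl⟩, -, hlast⟩ := hp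
  simp [List.getLast?_map, hlast]

theorem mem_pairing_singleton_iff {b : AY} {h a : AX} :
    (h, a) ∈ pairing TX πb [b] ↔ h = a ∧ πb a = b := by
  constructor
  · rintro ⟨U, ⟨-, hmap⟩, hhead, hlast⟩
    obtain ⟨x, rfl, rfl⟩ := List.map_eq_singleton_iff.mp hmap
    cases Option.some.inj hhead
    cases Option.some.inj hlast
    exact ⟨rfl, rfl⟩
  · rintro ⟨rfl, rfl⟩
    exact ⟨[h], mem_preim_iff.mpr ⟨List.cons_ne_nil _ _, List.isChain_singleton h, rfl⟩, rfl, rfl⟩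

theorem mem_pairing_cons_iff {b : AY} {W : List AY} (hW : W ≠ []) {h a : AX} :
    (h, a) ∈ pairing TX πb (b :: W) ↔
      πb h = b ∧ ∃ h₁, TX h h₁ ∧ (h₁, a) ∈ pairing TX πb W := by
  simp only [pairing, Set.mem_ofPred_eq, mem_preim_iff]
  constructor
  · rintro ⟨U, ⟨-, hchain, hmap⟩, hhead, hlast⟩
    obtain ⟨U, rfl⟩ := List.head?_eq_some_iff.mp hhead
    obtain ⟨hb, rfl⟩ := List.cons_eq_cons.mp hmap
    obtain ⟨h₁, U, rfl⟩ := List.exists_cons_of_ne_nil (mt List.map_eq_nil_iff.mpr hW)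
    obtain ⟨hTX, hchain⟩ := List.isChain_cons_cons.mp hchain
    exact ⟨hb, h₁, hTX, h₁ :: U, ⟨List.cons_ne_nil _ _, hchain, rfl⟩, rfl, hlast⟩
  · rintro ⟨rfl, h₁, hTX, U, ⟨-, hchain, rfl⟩, hhead, hlast⟩
    obtain ⟨U, rfl⟩ := List.head?_eq_some_iff.mp hhead
    exact ⟨h :: h₁ :: U,
      ⟨List.cons_ne_nil _ _, List.isChain_cons_cons.mpr ⟨hTX, hchain⟩, rfl⟩, rfl, hlast⟩

theorem exists_mem_pairing_fst_iff {W : List AY} {a : AX} :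
    (∃ h, (h, a) ∈ pairing TX πb W) ↔ ∃ U, U ++ [a] ∈ preim TX πb W := by
  constructor
  · rintro ⟨h, X, hX, -, hlast⟩
    obtain ⟨U, rfl⟩ := List.getLast?_eq_some_iff.mp hlast
    exact ⟨U, hX⟩
  · rintro ⟨U, hU⟩
    exact ⟨_, U ++ [a], hU, List.head?_eq_some_head (by simp), by simp⟩

theorem exists_mem_pairing_snd_iff {W : List AY} {a : AX} :
    (∃ l, (a, l) ∈ pairing TX πb W) ↔ ∃ V, a :: V ∈ preim TX πb W := by
  constructor
  · rintro ⟨l, X, hX, hhead, -⟩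
    obtain ⟨V, rfl⟩ := List.head?_eq_some_iff.mp hhead
    exact ⟨V, hX⟩
  · rintro ⟨V, hV⟩
    exact ⟨_, a :: V, hV, rfl, List.getLast?_eq_some_getLast (by simp)⟩

theorem append_cons_mem_preim_iff {U V : List AX} {P Q : List AY} {a : AX} {b : AY}
    (hlen : U.length = P.length) :
    U ++ a :: V ∈ preim TX πb (P ++ b :: Q) ↔
      U ++ [a] ∈ preim TX πb (P ++ [b]) ∧ a :: V ∈ preim TX πb (b :: Q) := by
  have hlen' : (U.map πb).length = P.length := by simpa using hlen
  simp only [mem_preim_iff, List.map_append, List.map_cons, List.map_nil,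
    List.append_eq_append_iff_of_size_eq_left hlen', List.cons_eq_cons]
  rw [List.isChain_split]
  simp only [ne_eq, List.append_eq_nil_iff, List.cons_ne_nil, and_false, not_false_eq_true,
    true_and]
  tauto

theorem mem_preimAt_iff {W : List AY} {i : ℕ} {a : AX} :
    a ∈ preimAt TX πb W i ↔ ∃ U V, U.length = i ∧ U ++ a :: V ∈ preim TX πb W := by
  constructor
  · rintro ⟨X, hX, hXa⟩
    obtain ⟨hi, rfl⟩ := List.getElem?_eq_some_iff.mp hXa
    refine ⟨X.take i, X.drop (i + 1), List.length_take_of_le hi.le, ?_⟩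
    rwa [← List.drop_eq_getElem_cons hi, List.take_append_drop]
  · rintro ⟨U, V, rfl, hX⟩
    exact ⟨U ++ a :: V, hX, by simp⟩

theorem mem_preimAt_append_cons_iff {P Q : List AY} {b : AY} {a : AX} :
    a ∈ preimAt TX πb (P ++ b :: Q) P.length ↔
      (∃ h, (h, a) ∈ pairing TX πb (P ++ [b])) ∧ ∃ l, (a, l) ∈ pairing TX πb (b :: Q) := by
  rw [mem_preimAt_iff, exists_mem_pairing_fst_iff, exists_mem_pairing_snd_iff]
  constructor
  · rintro ⟨U, V, hlen, hUV⟩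
    obtain ⟨hU, hV⟩ := (append_cons_mem_preim_iff hlen).mp hUV
    exact ⟨⟨U, hU⟩, ⟨V, hV⟩⟩
  · rintro ⟨⟨U, hU⟩, ⟨V, hV⟩⟩
    have hlen : U.length = P.length := by
      simpa using congrArg List.length (mem_preim_iff.mp hU).2.2
    exact ⟨U, V, hlen, (append_cons_mem_preim_iff hlen).mpr ⟨hU, hV⟩⟩

theorem dstar_le_ncard_preimAt {W : List AY} {i : ℕ} (h : (preimAt TX πb W i).Nonempty) :
    dstar TX πb ≤ (preimAt TX πb W i).ncard := by
  obtain ⟨a, X, hX, hXa⟩ := h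
  refine Nat.sInf_le ⟨W, i, ⟨X, hX⟩, ?_, rfl⟩
  rw [← (mem_preim_iff.mp hX).2.2, List.length_map]
  exact (List.getElem?_eq_some_iff.mp hXa).1

end Blocks

section Walks

variable {AX AY : Type*} [Fintype AX] [DecidableEq AX] [DecidableEq AY]
  {TX : AX → AX → Prop} [DecidableRel TX] {πb : AX → AY}

omit [DecidableEq AX] in
theorem mem_fiber {a : AX} {b : AY} : a ∈ fiber πb b ↔ πb a = b := by
  simp [fiber]

theorem IsGWalk.cons_cons {b b₁ : AY} {W : List AY} {A A₁ : Finset AX} {U : List (Finset AX)}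
    (h : IsGWalk TX πb (b :: b₁ :: W) (A :: A₁ :: U)) :
    edgeG TX πb (b, A) (b₁, A₁) ∧ IsGWalk TX πb (b₁ :: W) (A₁ :: U) :=
  ⟨h.2.2 0 b b₁ A A₁ rfl rfl rfl rfl,
    Nat.succ_injective h.1, fun i => h.2.1 (i + 1), fun i => h.2.2 (i + 1)⟩

theorem IsG'Walk.cons_cons {b b₁ : AY} {W : List AY} {A A₁ : Finset AX} {U : List (Finset AX)}
    (h : IsG'Walk TX πb (b :: b₁ :: W) (A :: A₁ :: U)) :
    edgeG' TX πb (b, A) (b₁, A₁) ∧ IsG'Walk TX πb (b₁ :: W) (A₁ :: U) :=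
  ⟨h.2.2 0 b b₁ A A₁ rfl rfl rfl rfl,
    Nat.succ_injective h.1, fun i => h.2.1 (i + 1), fun i => h.2.2 (i + 1)⟩

theorem IsGWalk.mem_last_iff {W : List AY} {U : List (Finset AX)} {A₀ A : Finset AX}
    (hU : IsGWalk TX πb W U) (hhead : U.head? = some A₀) (hlast : U.getLast? = some A)
    {a : AX} : a ∈ A ↔ ∃ h ∈ A₀, (h, a) ∈ pairing TX πb W := by
  induction W generalizing U A₀ with
  | nil => simp [List.length_eq_zero_iff.mp hU.1] at hhead
  | cons b W ih =>
    obtain ⟨U, rfl⟩ := List.head?_eq_some_iff.mp hhead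
    rcases W with _ | ⟨b₁, W⟩ <;> rcases U with _ | ⟨A₁, U⟩
    · cases Option.some.inj hlast
      have hA₀ : A₀ ⊆ fiber πb b := hU.2.1 0 b A₀ rfl rfl
      simp only [mem_pairing_singleton_iff]
      exact ⟨fun ha => ⟨a, ha, rfl, mem_fiber.mp (hA₀ ha)⟩, fun ⟨_, hh, rfl, _⟩ => hh⟩
    · exact absurd hU.1 (by simp)
    · exact absurd hU.1 (by simp)
    · obtain ⟨hedge, hU⟩ := hU.cons_cons
      obtain ⟨hA₀ : A₀ ⊆ fiber πb b, -, -, hA₁ : A₁ = (fiber πb b₁).filter _⟩ := hedge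
      simp only [ih hU rfl hlast, mem_pairing_cons_iff (List.cons_ne_nil _ _), hA₁,
        Finset.mem_filter, mem_fiber]
      constructor
      · rintro ⟨h₁, ⟨-, h, hh, hTX⟩, hp⟩
        exact ⟨h, hh, mem_fiber.mp (hA₀ hh), h₁, hTX, hp⟩
      · rintro ⟨h, hh, -, h₁, hTX, hp⟩
        exact ⟨h₁, ⟨(Option.some.inj (head?_eq_of_mem_pairing hp)).symm, h, hh, hTX⟩, hp⟩

theorem IsG'Walk.mem_head_iff {W : List AY} {V : List (Finset AX)} {A A₁ : Finset AX}
    (hV : IsG'Walk TX πb W V) (hhead : V.head? = some A) (hlast : V.getLast? = some A₁)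
    {a : AX} : a ∈ A ↔ ∃ l ∈ A₁, (a, l) ∈ pairing TX πb W := by
  induction W generalizing V A a with
  | nil => simp [List.length_eq_zero_iff.mp hV.1] at hhead
  | cons b W ih =>
    obtain ⟨V, rfl⟩ := List.head?_eq_some_iff.mp hhead
    rcases W with _ | ⟨b₁, W⟩ <;> rcases V with _ | ⟨A', V⟩
    · cases Option.some.inj hlast
      have hA : A ⊆ fiber πb b := hV.2.1 0 b A rfl rfl
      simp only [mem_pairing_singleton_iff]
      exact ⟨fun ha => ⟨a, ha, rfl, mem_fiber.mp (hA ha)⟩, fun ⟨_, hl, rfl, _⟩ => hl⟩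
    · exact absurd hV.1 (by simp)
    · exact absurd hV.1 (by simp)
    · obtain ⟨hedge, hV⟩ := hV.cons_cons
      obtain ⟨-, -, -, hA : A = (fiber πb b).filter _⟩ := hedge
      simp only [hA, Finset.mem_filter, mem_fiber, ih hV rfl hlast,
        mem_pairing_cons_iff (List.cons_ne_nil _ _)]
      constructor
      · rintro ⟨hab, a', ⟨l, hl, hp⟩, hTX⟩
        exact ⟨l, hl, hab, a', hTX, hp⟩
      · rintro ⟨l, hl, hab, a', hTX, hp⟩
        exact ⟨hab, a', ⟨l, hl, hp⟩, hTX⟩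

theorem IsGWalk.mem_last_iff_of_head_eq_fiber {W : List AY} {U : List (Finset AX)}
    {A : Finset AX} (hU : IsGWalk TX πb W U) (hhead : U.head? = W.head?.map (fiber πb))
    (hlast : U.getLast? = some A) {a : AX} : a ∈ A ↔ ∃ h, (h, a) ∈ pairing TX πb W := by
  rcases W with _ | ⟨b, W⟩
  · simp [List.length_eq_zero_iff.mp hU.1] at hlast
  rw [hU.mem_last_iff hhead hlast]
  refine ⟨fun ⟨h, _, hp⟩ => ⟨h, hp⟩, fun ⟨h, hp⟩ => ⟨h, ?_, hp⟩⟩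
  exact mem_fiber.mpr (Option.some.inj (head?_eq_of_mem_pairing hp)).symm

theorem IsG'Walk.mem_head_iff_of_last_eq_fiber {W : List AY} {V : List (Finset AX)}
    {A : Finset AX} (hV : IsG'Walk TX πb W V) (hhead : V.head? = some A)
    (hlast : V.getLast? = W.getLast?.map (fiber πb)) {a : AX} :
    a ∈ A ↔ ∃ l, (a, l) ∈ pairing TX πb W := by
  cases hc : W.getLast? with
  | none =>
    obtain rfl := List.getLast?_eq_none_iff.mp hc
    simp [List.length_eq_zero_iff.mp hV.1] at hhead
  | some c =>
    rw [hc, Option.map_some] at hlast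
    rw [hV.mem_head_iff hhead hlast]
    refine ⟨fun ⟨l, _, hp⟩ => ⟨l, hp⟩, fun ⟨l, hp⟩ => ⟨l, ?_, hp⟩⟩
    exact mem_fiber.mpr (Option.some.inj ((getLast?_eq_of_mem_pairing hp).symm.trans hc))

end Walks

/-- If `A` is the endpoint of a `G`-walk over `P` starting at a full-fiber
vertex, `A'` is the start of a `G'`-walk over `Q` ending at a full-fiber
vertex, and `A ∩ A' ≠ ∅`, then `A ∩ A'` is exactly the set of symbols occurring
at position `|P| - 1` of preimage blocks of the overlapped concatenation
`P · Q`, and in particular `d*_π ≤ |A ∩ A'|`. -/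
theorem intersection_eq_preimAt {AX AY : Type*}
    [Fintype AX] [DecidableEq AX] [DecidableEq AY]
    (TX : AX → AX → Prop) [DecidableRel TX] (πb : AX → AY)
    (P Q : List AY) (U V : List (Finset AX)) (A A' : Finset AX)
    (hP : P ≠ []) (hQ : Q ≠ [])
    (hU : IsGWalk TX πb P U) (hUhead : U.head? = P.head?.map (fiber πb))
    (hUlast : U.getLast? = some A)
    (hV : IsG'Walk TX πb Q V) (hVlast : V.getLast? = Q.getLast?.map (fiber πb))
    (hVhead : V.head? = some A')
    (hAA' : (A ∩ A').Nonempty) :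
    (↑(A ∩ A') : Set AX) = preimAt TX πb (P ++ Q.tail) (P.length - 1) ∧
    dstar TX πb ≤ (A ∩ A').card := by
  obtain ⟨P, b, rfl⟩ : ∃ P₀ b, P = P₀ ++ [b] :=
    ⟨P.dropLast, P.getLast hP, (List.dropLast_append_getLast hP).symm⟩
  obtain ⟨c, Q, rfl⟩ := List.exists_cons_of_ne_nil hQ
  have hA (a : AX) : a ∈ A ↔ ∃ h, (h, a) ∈ pairing TX πb (P ++ [b]) :=
    hU.mem_last_iff_of_head_eq_fiber hUhead hUlast
  have hA' (a : AX) : a ∈ A' ↔ ∃ l, (a, l) ∈ pairing TX πb (c :: Q) :=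
    hV.mem_head_iff_of_last_eq_fiber hVhead hVlast
  obtain rfl : b = c := by
    obtain ⟨a, ha⟩ := hAA'
    obtain ⟨⟨h, hh⟩, ⟨l, hl⟩⟩ := And.imp (hA a).mp (hA' a).mp (Finset.mem_inter.mp ha)
    simpa using (getLast?_eq_of_mem_pairing hh).trans (head?_eq_of_mem_pairing hl).symm
  have hset : (↑(A ∩ A') : Set AX) = preimAt TX πb (P ++ b :: Q) P.length := by
    ext a
    simp only [Finset.coe_inter, Set.mem_inter_iff, Finset.mem_coe, hA, hA',
      mem_preimAt_append_cons_iff]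
  simp only [List.tail_cons, List.append_assoc, List.singleton_append, List.length_append,
    List.length_singleton, Nat.add_sub_cancel]
  refine ⟨hset, ?_⟩
  rw [← Set.ncard_coe_finset, hset]
  exact dstar_le_ncard_preimAt (hset ▸ Finset.coe_nonempty.mpr hAA')
end

section
/- Let π be a one-block factor code from a one-step SFT X to a sofic shift Y, let W be a Y-block of length n+1 with A = π_b^{-1}(W)_0, and suppose positions k < r ≤ n satisfy W_k = W_r, π_b^{-1}(W)_k = π_b^{-1}(W)_r = D, and P_{W_0…W_k}(A,D) = P_{W_0…W_r}(A,D). Then the excised block Z = W_0…W_k W_{r+1}…W_n is a legal Y-block with π_b^{-1}(Z)_0 = A, π_b^{-1}(Z)_{s} = π_b^{-1}(W)_n (where s = n − (r − k)), and P_Z(A, π_b^{-1}(W)_n) = P_W(A, π_b^{-1}(W)_n). -/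
open List

/-!
In a one-step SFT a preimage of `B ++ C` is a preimage of `B` glued, at its last symbol `c`,
to a path from `c` that reads `C`. Hence the pairing of `B ++ C` depends on `B` only through the
pairing of `B`, so equal prefix pairings survive appending the common tail `W_{r+1}…W_n`.
Being a `Y`-block and the two endpoint fiber sets are all read off the pairing.
-/

namespace Excision

variable {AX AY : Type*} {TX : AX → AX → Prop} {πb : AX → AY}

variable (TX πb) in
def ReachesAlong (C : List AY) (c b : AX) : Prop :=
  ∃ V : List AX, V.map πb = C ∧ (c :: V).IsChain TX ∧ (c :: V).getLast? = some b

theorem mem_pairing_append {B C : List AY} (hB : B ≠ []) {a b : AX} :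
    (a, b) ∈ pairing TX πb (B ++ C) ↔
      ∃ c, (a, c) ∈ pairing TX πb B ∧ ReachesAlong TX πb C c b := by
  constructor
  · rintro ⟨U, ⟨⟨-, hchain⟩, hmap⟩, hhead, hlast⟩
    obtain ⟨U₁, V, rfl, hU₁, hV⟩ := List.map_eq_append_iff.mp hmap
    obtain ⟨D, c, rfl⟩ : ∃ D c, U₁ = D ++ [c] := by
      rcases eq_nil_or_concat' U₁ with rfl | h
      · exact absurd hU₁.symm (by simpa using hB)
      · exact h
    rw [append_assoc, singleton_append] at hchain hhead hlast
    obtain ⟨hchain₁, hchain₂⟩ := isChain_split.mp hchain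
    refine ⟨c, ⟨D ++ [c], ⟨⟨by simp, hchain₁⟩, hU₁⟩, ?_, by simp⟩, V, hV, hchain₂, ?_⟩
    · simpa [head?_append] using hhead
    · rwa [getLast?_append_of_ne_nil _ (cons_ne_nil _ _)] at hlast
  · rintro ⟨c, ⟨U₁, ⟨⟨-, hchain₁⟩, hmap₁⟩, hhead, hlast₁⟩, V, hV, hchain₂, hlast⟩
    obtain ⟨D, rfl⟩ := getLast?_eq_some_iff.mp hlast₁
    refine ⟨D ++ c :: V, ⟨⟨by simp, isChain_split.mpr ⟨hchain₁, hchain₂⟩⟩, ?_⟩, ?_, ?_⟩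
    · simp [← hmap₁, ← hV]
    · simpa [head?_append] using hhead
    · rwa [getLast?_append_of_ne_nil _ (cons_ne_nil _ _)]

theorem pairing_append_congr {A B : List AY} (C : List AY) (hA : A ≠ []) (hB : B ≠ [])
    (h : pairing TX πb A = pairing TX πb B) :
    pairing TX πb (A ++ C) = pairing TX πb (B ++ C) := by
  ext ⟨a, b⟩
  rw [mem_pairing_append hA, mem_pairing_append hB, h]

theorem length_of_mem_preim {W : List AY} {U : List AX} (hU : U ∈ preim TX πb W) :
    U.length = W.length := by
  rw [← hU.2, length_map]

theorem exists_getLast?_of_mem_preim {W : List AY} {U : List AX} (hU : U ∈ preim TX πb W) :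
    ∃ b, U.getLast? = some b :=
  Option.isSome_iff_exists.mp (getLast?_isSome.mpr hU.1.1)

theorem isYBlock_iff_pairing_nonempty {W : List AY} :
    IsYBlock TX πb W ↔ (pairing TX πb W).Nonempty := by
  constructor
  · rintro ⟨U, hU⟩
    obtain ⟨a, ha⟩ := Option.isSome_iff_exists.mp (isSome_head?.mpr hU.1.1)
    obtain ⟨b, hb⟩ := exists_getLast?_of_mem_preim hU
    exact ⟨(a, b), U, hU, ha, hb⟩
  · rintro ⟨-, U, hU, -⟩
    exact ⟨U, hU⟩

theorem IsYBlock.ne_nil {W : List AY} (hW : IsYBlock TX πb W) : W ≠ [] := by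
  obtain ⟨U, ⟨hU, -⟩, rfl⟩ := hW
  simpa using hU

theorem preimAt_zero_eq_image_fst (W : List AY) :
    preimAt TX πb W 0 = Prod.fst '' pairing TX πb W := by
  ext a
  constructor
  · rintro ⟨U, hU, ha⟩
    obtain ⟨b, hb⟩ := exists_getLast?_of_mem_preim hU
    exact ⟨(a, b), ⟨U, hU, by rwa [head?_eq_getElem?], hb⟩, rfl⟩
  · rintro ⟨⟨a, b⟩, ⟨U, hU, ha, -⟩, rfl⟩
    exact ⟨U, hU, by rwa [← head?_eq_getElem?]⟩

theorem preimAt_length_sub_one_eq_image_snd (W : List AY) :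
    preimAt TX πb W (W.length - 1) = Prod.snd '' pairing TX πb W := by
  ext b
  constructor
  · rintro ⟨U, hU, hb⟩
    obtain ⟨a, ha⟩ := Option.isSome_iff_exists.mp (isSome_head?.mpr hU.1.1)
    refine ⟨(a, b), ⟨U, hU, ha, ?_⟩, rfl⟩
    rwa [getLast?_eq_getElem?, length_of_mem_preim hU]
  · rintro ⟨⟨a, b⟩, ⟨U, hU, -, hb⟩, rfl⟩
    refine ⟨U, hU, ?_⟩
    rwa [getLast?_eq_getElem?, length_of_mem_preim hU] at hb

end Excision

open Excision in
theorem excision_general {AX AY : Type*} (TX : AX → AX → Prop) (πb : AX → AY)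
    (W : List AY) (k r : ℕ)
    (hW : IsYBlock TX πb W)
    (hpair : pairing TX πb (W.take (k + 1)) = pairing TX πb (W.take (r + 1))) :
    IsYBlock TX πb (W.take (k + 1) ++ W.drop (r + 1)) ∧
    preimAt TX πb (W.take (k + 1) ++ W.drop (r + 1)) 0 = preimAt TX πb W 0 ∧
    preimAt TX πb (W.take (k + 1) ++ W.drop (r + 1))
        ((W.take (k + 1) ++ W.drop (r + 1)).length - 1)
      = preimAt TX πb W (W.length - 1) ∧
    pairing TX πb (W.take (k + 1) ++ W.drop (r + 1)) = pairing TX πb W := by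
  have hne := hW.ne_nil
  have hZ : pairing TX πb (W.take (k + 1) ++ W.drop (r + 1)) = pairing TX πb W := by
    rw [pairing_append_congr _ (by simpa using hne) (by simpa using hne) hpair,
      take_append_drop]
  refine ⟨isYBlock_iff_pairing_nonempty.mpr ?_, ?_, ?_, hZ⟩
  · exact hZ ▸ isYBlock_iff_pairing_nonempty.mp hW
  · rw [preimAt_zero_eq_image_fst, preimAt_zero_eq_image_fst, hZ]
  · rw [preimAt_length_sub_one_eq_image_snd, preimAt_length_sub_one_eq_image_snd, hZ]

/-- Excision: if two positions `k < r` of a `Y`-block `W` carry the same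
symbol, the same preimage symbol set, and the same prefix pairing, then the
excised word `Z = W_0…W_k W_{r+1}…W_n` is a legal `Y`-block with the same
endpoint preimage sets and the same end-to-end pairing as `W`. -/
theorem excision {AX AY : Type*} (TX : AX → AX → Prop) (πb : AX → AY)
    (W : List AY) (k r : ℕ)
    (hW : IsYBlock TX πb W) (hkr : k < r) (hr : r < W.length)
    (hsym : W[k]? = W[r]?)
    (hset : preimAt TX πb W k = preimAt TX πb W r)
    (hpair : pairing TX πb (W.take (k + 1)) = pairing TX πb (W.take (r + 1))) :
    IsYBlock TX πb (W.take (k + 1) ++ W.drop (r + 1)) ∧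
    preimAt TX πb (W.take (k + 1) ++ W.drop (r + 1)) 0 = preimAt TX πb W 0 ∧
    preimAt TX πb (W.take (k + 1) ++ W.drop (r + 1))
        ((W.take (k + 1) ++ W.drop (r + 1)).length - 1)
      = preimAt TX πb W (W.length - 1) ∧
    pairing TX πb (W.take (k + 1) ++ W.drop (r + 1)) = pairing TX πb W :=
  excision_general TX πb W k r hW hpair
end
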